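/- Let μ be a probability measure on ℝ^d that is absolutely continuous with respect to Lebesgue measure and has bounded support, let r > 0 and s > 0, and let X_1, X_2, … be i.i.d. with law μ. Then there is a constant C > 0 such that for all n ≥ 2, E[ sup_{z ∈ supp(μ)} |SD^r_s(z | X_{1:n}) − SD^r_s(z | μ)| ] ≤ C · log(n) / √n. -/

import Mathlib

/-!
For a fixed center `c`, the empirical soft mass `n⁻¹ ∑ sig_s(r² − ‖Xᵢ − c‖²)` is an average of
i.i.d. `[0, 1]`-valued variables, so Hoeffding's inequality controls its deviation from the
population mass `∫ sig_s(r² − ‖x − c‖²) dμ`. Both masses are Lipschitz in `c` on bounded sets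
(the sigmoid is `1/4`-Lipschitz and the samples lie in the bounded support), and the two depths
are infima of these masses over centers of norm at most `K + r`. A union bound over a grid of mesh
`≈ 1/√n`, which has `O(√n ^ d)` points, therefore bounds the deviation uniformly in `z` by
`O(1/√n) + t` outside an event of probability `O(√n ^ d) · exp (−2 n t²)`, and on that event the
deviation is at most `1`. The choice `t = (d + 1) log n / √n` gives `O(log n / √n)`.
-/

open MeasureTheory

/-- The sigmoid function with scale `s`. -/
noncomputable def sig (s t : ℝ) : ℝ := 1 / (1 + Real.exp (-t / s))

/-- The (smoothed, `s > 0`) sphere depth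
`SD^r_s(z|μ) = inf_{‖c−z‖=r} ∫ sig_s(r² − ‖x − c‖²) dμ(x)`. -/
noncomputable def SDs (d : ℕ) (r s : ℝ) (z : EuclideanSpace ℝ (Fin d))
    (μ : Measure (EuclideanSpace ℝ (Fin d))) : ℝ :=
  ⨅ c : Metric.sphere z r, ∫ x, sig s (r ^ 2 - ‖x - (c : EuclideanSpace ℝ (Fin d))‖ ^ 2) ∂μ

/-- The sphere depth of the empirical measure of the samples `x₁,…,xₙ`:
`SD^r_s(z|x_{1:n}) = inf_{‖c−z‖=r} (1/n) Σᵢ sig_s(r² − ‖xᵢ − c‖²)`. -/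
noncomputable def SDemp (d : ℕ) (r s : ℝ) (z : EuclideanSpace ℝ (Fin d)) (n : ℕ)
    (x : Fin n → EuclideanSpace ℝ (Fin d)) : ℝ :=
  ⨅ c : Metric.sphere z r,
    (n : ℝ)⁻¹ * ∑ i, sig s (r ^ 2 - ‖x i - (c : EuclideanSpace ℝ (Fin d))‖ ^ 2)

/-- The (topological) support of a measure: points all of whose neighborhoods have
positive measure. -/
def msupport {E : Type*} [TopologicalSpace E] [MeasurableSpace E] (μ : Measure E) : Set E :=
  {x | ∀ U ∈ nhds x, μ U ≠ 0}

open ProbabilityTheory Real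

lemma sig_eq_sigmoid (s t : ℝ) : sig s t = sigmoid (t / s) := by
  rw [sig, sigmoid_def, neg_div, one_div]

lemma sig_mem_Icc (s t : ℝ) : sig s t ∈ Set.Icc (0 : ℝ) 1 := by
  rw [sig_eq_sigmoid]
  exact ⟨sigmoid_nonneg _, sigmoid_le_one _⟩

lemma continuous_sig (s : ℝ) : Continuous (sig s) := by
  simp_rw [funext (sig_eq_sigmoid s)]
  fun_prop

lemma lipschitzWith_sigmoid : LipschitzWith 4⁻¹ sigmoid := by
  refine lipschitzWith_of_nnnorm_deriv_le differentiable_sigmoid fun x => ?_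
  have h0 := sigmoid_pos x
  have h1 := sigmoid_lt_one x
  rw [deriv_sigmoid, ← NNReal.coe_le_coe, coe_nnnorm, Real.norm_eq_abs,
    abs_of_pos (by nlinarith)]
  push_cast
  nlinarith [sq_nonneg (sigmoid x - 2⁻¹)]

lemma abs_sig_sub_sig_le (s a b : ℝ) : |sig s a - sig s b| ≤ |a - b| / (4 * |s|) := by
  have h := lipschitzWith_sigmoid.dist_le_mul (a / s) (b / s)
  rw [Real.dist_eq, Real.dist_eq, ← sub_div, abs_div] at h
  simp only [sig_eq_sigmoid]
  calc _ ≤ _ := h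
    _ = |a - b| / (4 * |s|) := by push_cast; ring

lemma abs_sq_norm_sub_sub_sq_norm_sub_le {E : Type*} [SeminormedAddCommGroup E] {x c c' : E}
    {K R : ℝ} (hx : ‖x‖ ≤ K) (hc : ‖c‖ ≤ R) (hc' : ‖c'‖ ≤ R) :
    |‖x - c‖ ^ 2 - ‖x - c'‖ ^ 2| ≤ 2 * (K + R) * ‖c - c'‖ := by
  have hdiff : |‖x - c‖ - ‖x - c'‖| ≤ ‖c - c'‖ := by
    simpa [norm_sub_rev c c'] using abs_norm_sub_norm_le (x - c) (x - c')
  have hsum : ‖x - c‖ + ‖x - c'‖ ≤ 2 * (K + R) := by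
    linarith [norm_sub_le x c, norm_sub_le x c']
  rw [sq_sub_sq, abs_mul, abs_of_nonneg (by positivity)]
  exact mul_le_mul hsum hdiff (abs_nonneg _) (by linarith [norm_nonneg x, norm_nonneg c])

lemma abs_sig_sub_sig_sq_norm_sub_le {E : Type*} [SeminormedAddCommGroup E] (r s : ℝ)
    {x c c' : E} {K R : ℝ} (hx : ‖x‖ ≤ K) (hc : ‖c‖ ≤ R) (hc' : ‖c'‖ ≤ R) :
    |sig s (r ^ 2 - ‖x - c‖ ^ 2) - sig s (r ^ 2 - ‖x - c'‖ ^ 2)| ≤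
      (K + R) / (2 * |s|) * ‖c - c'‖ := by
  calc _ ≤ |(r ^ 2 - ‖x - c‖ ^ 2) - (r ^ 2 - ‖x - c'‖ ^ 2)| / (4 * |s|) :=
        abs_sig_sub_sig_le s _ _
    _ = |‖x - c‖ ^ 2 - ‖x - c'‖ ^ 2| / (4 * |s|) := by
        rw [sub_sub_sub_cancel_left, abs_sub_comm]
    _ ≤ 2 * (K + R) * ‖c - c'‖ / (4 * |s|) := by
        gcongr; exact abs_sq_norm_sub_sub_sq_norm_sub_le hx hc hc'
    _ = (K + R) / (2 * |s|) * ‖c - c'‖ := by ring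

lemma ciInf_le_ciInf_add {ι : Sort*} [Nonempty ι] {F G : ι → ℝ} {M : ℝ}
    (hF : BddBelow (Set.range F)) (h : ∀ i, F i ≤ G i + M) : ⨅ i, F i ≤ (⨅ i, G i) + M :=
  sub_le_iff_le_add.1 <| le_ciInf fun i => sub_le_iff_le_add.2 <| (ciInf_le hF i).trans (h i)

lemma abs_ciInf_sub_ciInf_le {ι : Sort*} {F G : ι → ℝ} {M : ℝ} (hF : BddBelow (Set.range F))
    (hG : BddBelow (Set.range G)) (hM : 0 ≤ M) (h : ∀ i, |F i - G i| ≤ M) :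
    |(⨅ i, F i) - ⨅ i, G i| ≤ M := by
  cases isEmpty_or_nonempty ι
  · simpa [Real.iInf_of_isEmpty] using hM
  · refine abs_sub_le_iff.2 ⟨?_, ?_⟩ <;> rw [sub_le_iff_le_add']
    · exact ciInf_le_ciInf_add hF fun i => by linarith [abs_sub_le_iff.1 (h i)]
    · exact ciInf_le_ciInf_add hG fun i => by linarith [abs_sub_le_iff.1 (h i)]

section SoftBallMass

variable {E : Type*} [NormedAddCommGroup E] (r s : ℝ)

noncomputable def softBallMass [MeasurableSpace E] (μ : Measure E) (c : E) : ℝ :=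
  ∫ x, sig s (r ^ 2 - ‖x - c‖ ^ 2) ∂μ

noncomputable def empiricalSoftBallMass {n : ℕ} (x : Fin n → E) (c : E) : ℝ :=
  (n : ℝ)⁻¹ * ∑ i, sig s (r ^ 2 - ‖x i - c‖ ^ 2)

variable {r s}

lemma softBallMass_mem_Icc [MeasurableSpace E] (μ : Measure E) [IsProbabilityMeasure μ] (c : E) :
    softBallMass r s μ c ∈ Set.Icc (0 : ℝ) 1 := by
  have h0 : ∀ x : E, 0 ≤ sig s (r ^ 2 - ‖x - c‖ ^ 2) := fun x => (sig_mem_Icc _ _).1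
  refine ⟨integral_nonneg h0, ?_⟩
  calc softBallMass r s μ c ≤ ∫ _, (1 : ℝ) ∂μ :=
        integral_mono_of_nonneg (ae_of_all _ h0) (integrable_const 1)
          (ae_of_all _ fun x => (sig_mem_Icc _ _).2)
    _ = 1 := by simp

lemma empiricalSoftBallMass_mem_Icc {n : ℕ} (x : Fin n → E) (c : E) :
    empiricalSoftBallMass r s x c ∈ Set.Icc (0 : ℝ) 1 := by
  refine ⟨mul_nonneg (by positivity) (Finset.sum_nonneg fun i _ => (sig_mem_Icc _ _).1), ?_⟩
  calc empiricalSoftBallMass r s x c ≤ (n : ℝ)⁻¹ * ∑ _i : Fin n, (1 : ℝ) := by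
        unfold empiricalSoftBallMass
        gcongr with i
        exact (sig_mem_Icc _ _).2
    _ ≤ 1 := by simpa using inv_mul_le_one (a := (n : ℝ))

lemma abs_softBallMass_sub_le [MeasurableSpace E] [OpensMeasurableSpace E] {μ : Measure E}
    [IsProbabilityMeasure μ] {K R : ℝ} (hμ : ∀ᵐ x ∂μ, ‖x‖ ≤ K) {c c' : E} (hc : ‖c‖ ≤ R)
    (hc' : ‖c'‖ ≤ R) :
    |softBallMass r s μ c - softBallMass r s μ c'| ≤ (K + R) / (2 * |s|) * ‖c - c'‖ := by
  have hint (c : E) : Integrable (fun x => sig s (r ^ 2 - ‖x - c‖ ^ 2)) μ :=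
    .of_mem_Icc 0 1 ((continuous_sig s).comp (by fun_prop)).aemeasurable
      (ae_of_all _ fun _ => sig_mem_Icc _ _)
  rw [softBallMass, softBallMass, ← integral_sub (hint c) (hint c'), ← Real.norm_eq_abs]
  simpa using norm_integral_le_of_norm_le_const
    (hμ.mono fun x hx =>
      (Real.norm_eq_abs _).trans_le (abs_sig_sub_sig_sq_norm_sub_le r s hx hc hc'))

lemma abs_empiricalSoftBallMass_sub_le {n : ℕ} {x : Fin n → E} {K R : ℝ} (hK : 0 ≤ K)
    (hx : ∀ i, ‖x i‖ ≤ K) {c c' : E} (hc : ‖c‖ ≤ R) (hc' : ‖c'‖ ≤ R) :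
    |empiricalSoftBallMass r s x c - empiricalSoftBallMass r s x c'| ≤
      (K + R) / (2 * |s|) * ‖c - c'‖ := by
  have hL : 0 ≤ (K + R) / (2 * |s|) * ‖c - c'‖ := by
    have := (norm_nonneg c).trans hc
    positivity
  rw [empiricalSoftBallMass, empiricalSoftBallMass, ← mul_sub, ← Finset.sum_sub_distrib, abs_mul,
    abs_of_nonneg (by positivity)]
  calc (n : ℝ)⁻¹ * |∑ i, (sig s (r ^ 2 - ‖x i - c‖ ^ 2) - sig s (r ^ 2 - ‖x i - c'‖ ^ 2))|
      ≤ (n : ℝ)⁻¹ * ∑ _i : Fin n, (K + R) / (2 * |s|) * ‖c - c'‖ := by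
        gcongr
        refine (Finset.abs_sum_le_sum_abs _ _).trans (Finset.sum_le_sum fun i _ => ?_)
        exact abs_sig_sub_sig_sq_norm_sub_le r s (hx i) hc hc'
    _ = ((n : ℝ)⁻¹ * n) * ((K + R) / (2 * |s|) * ‖c - c'‖) := by simp [mul_assoc]
    _ ≤ (K + R) / (2 * |s|) * ‖c - c'‖ := mul_le_of_le_one_left hL inv_mul_le_one

end SoftBallMass

lemma abs_SDemp_sub_SDs_le {d n : ℕ} {r s M : ℝ} {z : EuclideanSpace ℝ (Fin d)}
    {x : Fin n → EuclideanSpace ℝ (Fin d)} {μ : Measure (EuclideanSpace ℝ (Fin d))}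
    [IsProbabilityMeasure μ] (hM : 0 ≤ M)
    (h : ∀ c ∈ Metric.sphere z r, |empiricalSoftBallMass r s x c - softBallMass r s μ c| ≤ M) :
    |SDemp d r s z n x - SDs d r s z μ| ≤ M :=
  abs_ciInf_sub_ciInf_le
    ⟨0, by rintro _ ⟨c, rfl⟩; exact (empiricalSoftBallMass_mem_Icc x c).1⟩
    ⟨0, by rintro _ ⟨c, rfl⟩; exact (softBallMass_mem_Icc μ c).1⟩ hM fun c => h c c.2

lemma exists_finset_card_le_forall_norm_sub_le {ι : Type*} [Fintype ι] {R δ : ℝ} (hR : 0 ≤ R)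
    (hδ : 0 < δ) :
    ∃ T : Finset (EuclideanSpace ℝ ι), (T.card : ℝ) ≤ (2 * R / δ + 3) ^ Fintype.card ι ∧
      ∀ c : EuclideanSpace ℝ ι, ‖c‖ ≤ R → ∃ p ∈ T, ‖c - p‖ ≤ δ * √(Fintype.card ι) := by
  classical
  set M : ℕ := ⌈R / δ⌉₊
  have hM : (M : ℝ) < R / δ + 1 := Nat.ceil_lt_add_one (div_nonneg hR hδ.le)
  let grid : (ι → ℤ) → EuclideanSpace ℝ ι := fun k => WithLp.toLp 2 fun i => k i * δ
  refine ⟨(Fintype.piFinset fun _ => Finset.Icc (-(M : ℤ)) M).image grid, ?_, fun c hc => ?_⟩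
  · calc _ ≤ ((Fintype.piFinset fun _ : ι => Finset.Icc (-(M : ℤ)) M).card : ℝ) := by
          exact_mod_cast Finset.card_image_le
      _ = ((2 * M + 1 : ℕ) : ℝ) ^ Fintype.card ι := by
          rw [Fintype.card_piFinset, Int.card_Icc, Finset.prod_const, Finset.card_univ]
          norm_cast
          congr 1
          omega
      _ ≤ (2 * R / δ + 3) ^ Fintype.card ι := by
          gcongr
          push_cast
          linarith [mul_div_assoc 2 R δ]
  refine ⟨grid fun i => round (c i / δ), Finset.mem_image_of_mem _ ?_, ?_⟩
  · simp only [Fintype.mem_piFinset, Finset.mem_Icc, ← abs_le]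
    intro i
    have hci : |c i / δ| ≤ R / δ := by
      rw [abs_div, abs_of_pos hδ]
      gcongr
      exact (PiLp.norm_apply_le c i).trans hc
    have : ((|round (c i / δ)| : ℤ) : ℝ) < (M : ℤ) + 1 := by
      push_cast
      have := abs_sub_abs_le_abs_sub (round (c i / δ) : ℝ) (c i / δ)
      rw [abs_sub_comm] at this
      linarith [abs_sub_round (c i / δ), Nat.le_ceil (R / δ)]
    exact Int.lt_add_one_iff.mp (by exact_mod_cast this)
  · have hcoord (i : ι) : ‖(c - grid fun i => round (c i / δ)) i‖ ^ 2 ≤ δ ^ 2 := by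
      have h : (c - grid fun i => round (c i / δ)) i = δ * (c i / δ - round (c i / δ)) := by
        simp only [PiLp.sub_apply, grid]
        field_simp
      rw [h, Real.norm_eq_abs, abs_mul, abs_of_pos hδ]
      gcongr
      nlinarith [abs_sub_round (c i / δ), abs_nonneg (c i / δ - round (c i / δ))]
    calc _ ≤ √(∑ _i : ι, δ ^ 2) := by
          rw [EuclideanSpace.norm_eq]
          exact Real.sqrt_le_sqrt (Finset.sum_le_sum fun i _ => hcoord i)
      _ = δ * √(Fintype.card ι) := by
          rw [Finset.sum_const, Finset.card_univ, nsmul_eq_mul, Real.sqrt_mul (by positivity),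
            Real.sqrt_sq hδ.le, mul_comm]

section Concentration

variable {Ω : Type*} [MeasurableSpace Ω] {P : Measure Ω} [IsProbabilityMeasure P]

lemma measureReal_le_abs_sum_le_of_iIndepFun {Z : ℕ → Ω → ℝ} {c : NNReal}
    (hindep : iIndepFun Z P) (hZ : ∀ i, HasSubgaussianMGF (Z i) c P) (n : ℕ) {ε : ℝ}
    (hε : 0 ≤ ε) :
    P.real {ω | ε ≤ |∑ i ∈ Finset.range n, Z i ω|} ≤ 2 * exp (-ε ^ 2 / (2 * n * c)) := by
  have hneg : iIndepFun (fun i => -Z i) P :=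
    hindep.comp (fun _ => Neg.neg) fun _ => measurable_neg
  have hsub : {ω | ε ≤ |∑ i ∈ Finset.range n, Z i ω|} ⊆
      {ω | ε ≤ ∑ i ∈ Finset.range n, Z i ω} ∪ {ω | ε ≤ ∑ i ∈ Finset.range n, (-Z i) ω} := by
    intro ω hω
    simpa only [Set.mem_union, Set.mem_ofPred_eq, Pi.neg_apply, Finset.sum_neg_distrib, ← le_abs]
      using hω
  calc _ ≤ _ := measureReal_mono hsub
    _ ≤ _ := measureReal_union_le _ _
    _ ≤ _ := add_le_add
        (HasSubgaussianMGF.measure_sum_range_ge_le_of_iIndepFun hindep (fun i _ => hZ i) hε)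
        (HasSubgaussianMGF.measure_sum_range_ge_le_of_iIndepFun hneg (fun i _ => (hZ i).neg) hε)
    _ = _ := by ring

variable {E : Type*} [NormedAddCommGroup E] [MeasurableSpace E] [OpensMeasurableSpace E]

lemma measureReal_lt_abs_empiricalSoftBallMass_sub_le {μ : Measure E} [IsProbabilityMeasure μ]
    {X : ℕ → Ω → E} (hXmeas : ∀ i, Measurable (X i)) (hXlaw : ∀ i, P.map (X i) = μ)
    (hXindep : iIndepFun X P) (r s : ℝ) (c : E) (n : ℕ) {t : ℝ} (ht : 0 ≤ t) :
    P.real {ω | t < |empiricalSoftBallMass r s (fun i : Fin n => X i ω) c -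
      softBallMass r s μ c|} ≤ 2 * exp (-2 * n * t ^ 2) := by
  set f : E → ℝ := fun x => sig s (r ^ 2 - ‖x - c‖ ^ 2)
  set m := softBallMass r s μ c
  have hf : Measurable f := ((continuous_sig s).comp (by fun_prop)).measurable
  have hmean (i : ℕ) : P[fun ω => f (X i ω)] = m := by
    rw [← integral_map (hXmeas i).aemeasurable hf.aestronglyMeasurable, hXlaw i]
    rfl
  have hZ (i : ℕ) : HasSubgaussianMGF (fun ω => f (X i ω) - m) ((‖(1 : ℝ) - 0‖₊ / 2) ^ 2) P := by
    rw [← hmean i]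
    exact hasSubgaussianMGF_of_mem_Icc (X := fun ω => f (X i ω)) (hf.comp (hXmeas i)).aemeasurable
      (ae_of_all _ fun ω => sig_mem_Icc _ _)
  have hindep : iIndepFun (fun i ω => f (X i ω) - m) P :=
    hXindep.comp (fun _ x => f x - m) fun _ => hf.sub_const m
  have hsum (ω : Ω) : (n : ℝ) * (empiricalSoftBallMass r s (fun i : Fin n => X i ω) c - m) =
      ∑ i ∈ Finset.range n, (f (X i ω) - m) := by
    rcases Nat.eq_zero_or_pos n with rfl | hn
    · simp
    · rw [empiricalSoftBallMass, Finset.sum_sub_distrib, Finset.sum_const, Finset.card_range,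
        nsmul_eq_mul, ← Fin.sum_univ_eq_sum_range (fun i => f (X i ω)), mul_sub, ← mul_assoc,
        mul_inv_cancel₀ (by positivity), one_mul]
  have hsub : {ω | t < |empiricalSoftBallMass r s (fun i : Fin n => X i ω) c - m|} ⊆
      {ω | n * t ≤ |∑ i ∈ Finset.range n, (f (X i ω) - m)|} := by
    intro ω hω
    simp only [Set.mem_ofPred_eq, ← hsum, abs_mul, Nat.abs_cast] at hω ⊢
    gcongr
  calc _ ≤ _ := measureReal_mono hsub
    _ ≤ _ := measureReal_le_abs_sum_le_of_iIndepFun hindep hZ n (by positivity)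
    _ = 2 * exp (-2 * n * t ^ 2) := by
        rcases eq_or_ne (n : ℝ) 0 with hn | hn
        · simp [hn]
        · congr 2
          simp only [sub_zero, nnnorm_one, one_div, inv_pow, NNReal.coe_inv, NNReal.coe_pow,
            NNReal.coe_ofNat, neg_mul]
          field_simp

end Concentration

/-- No measurability of `f` is assumed: if `f` is not integrable, its integral is `0`. -/
lemma integral_le_add_measureReal_of_le_one {Ω : Type*} [MeasurableSpace Ω] {P : Measure Ω}
    [IsProbabilityMeasure P] {f : Ω → ℝ} {B : Set Ω} {a : ℝ} (hB : MeasurableSet B) (ha : 0 ≤ a)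
    (hf0 : ∀ ω, 0 ≤ f ω) (hf1 : ∀ ω, f ω ≤ 1) (hfa : ∀ᵐ ω ∂P, ω ∉ B → f ω ≤ a) :
    ∫ ω, f ω ∂P ≤ a + P.real B := by
  have hint : Integrable (B.indicator (1 : Ω → ℝ)) P := (integrable_const 1).indicator hB
  calc ∫ ω, f ω ∂P ≤ ∫ ω, (a + B.indicator 1 ω) ∂P := by
        refine integral_mono_of_nonneg (ae_of_all _ hf0) ((integrable_const a).add hint) ?_
        filter_upwards [hfa] with ω hω
        by_cases hωB : ω ∈ B
        · simpa [hωB] using (hf1 ω).trans (le_add_of_nonneg_left ha)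
        · simpa [hωB] using hω hωB
    _ = a + P.real B := by
        rw [integral_add (integrable_const a) hint, integral_indicator_one hB]
        simp

lemma msupport_eq_support {E : Type*} [TopologicalSpace E] [MeasurableSpace E] (μ : Measure E) :
    msupport μ = μ.support := by
  ext x
  simp [msupport, Measure.mem_support_iff_forall, pos_iff_ne_zero]

section SphereDepth

variable {d : ℕ} {μ : Measure (EuclideanSpace ℝ (Fin d))} [IsProbabilityMeasure μ]

lemma abs_SDemp_sub_SDs_le_one (r s : ℝ) (z : EuclideanSpace ℝ (Fin d)) {n : ℕ}
    (x : Fin n → EuclideanSpace ℝ (Fin d)) : |SDemp d r s z n x - SDs d r s z μ| ≤ 1 :=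
  abs_SDemp_sub_SDs_le zero_le_one fun c _ =>
    abs_sub_le_of_nonneg_of_le (empiricalSoftBallMass_mem_Icc x c).1
      (empiricalSoftBallMass_mem_Icc x c).2 (softBallMass_mem_Icc μ c).1
      (softBallMass_mem_Icc μ c).2

lemma abs_SDemp_sub_SDs_le_of_net {n : ℕ} {r s K η t : ℝ} (hK : 0 ≤ K) (hr : 0 ≤ r)
    (hη : 0 ≤ η) (hη1 : η ≤ 1) (ht : 0 ≤ t) (hμ : ∀ᵐ y ∂μ, ‖y‖ ≤ K)
    {x : Fin n → EuclideanSpace ℝ (Fin d)} (hx : ∀ i, ‖x i‖ ≤ K) {z : EuclideanSpace ℝ (Fin d)}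
    (hz : ‖z‖ ≤ K) {T : Finset (EuclideanSpace ℝ (Fin d))}
    (hT : ∀ c : EuclideanSpace ℝ (Fin d), ‖c‖ ≤ K + r → ∃ p ∈ T, ‖c - p‖ ≤ η)
    (hdev : ∀ p ∈ T, |empiricalSoftBallMass r s x p - softBallMass r s μ p| ≤ t) :
    |SDemp d r s z n x - SDs d r s z μ| ≤ 2 * ((2 * K + r + 1) / (2 * |s|) * η) + t := by
  refine abs_SDemp_sub_SDs_le (by positivity) fun c hc => ?_
  rw [mem_sphere_iff_norm] at hc
  have hcK : ‖c‖ ≤ K + r := by linarith [norm_le_insert' c z]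
  obtain ⟨p, hpT, hcp⟩ := hT c hcK
  have hcR : ‖c‖ ≤ K + r + 1 := by linarith
  have hpR : ‖p‖ ≤ K + r + 1 := by linarith [norm_le_insert' p c, norm_sub_rev p c]
  have hL : (2 * K + r + 1) / (2 * |s|) * ‖c - p‖ ≤ (2 * K + r + 1) / (2 * |s|) * η := by
    gcongr
  have hKR : K + (K + r + 1) = 2 * K + r + 1 := by ring
  have hemp := abs_empiricalSoftBallMass_sub_le (r := r) (s := s) hK hx hcR hpR
  have hpop := abs_softBallMass_sub_le (r := r) (s := s) hμ hcR hpR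
  rw [hKR] at hemp hpop
  have := abs_sub_le (empiricalSoftBallMass r s x c) (empiricalSoftBallMass r s x p)
    (softBallMass r s μ c)
  have := abs_sub_le (empiricalSoftBallMass r s x p) (softBallMass r s μ p) (softBallMass r s μ c)
  linarith [hdev p hpT, abs_sub_comm (softBallMass r s μ p) (softBallMass r s μ c)]

variable {Ω : Type*} [MeasurableSpace Ω] {P : Measure Ω} [IsProbabilityMeasure P]
  {X : ℕ → Ω → EuclideanSpace ℝ (Fin d)}

theorem integral_iSup_abs_SDemp_sub_SDs_le {K r : ℝ} (hK : 0 ≤ K) (hr : 0 ≤ r)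
    (hμK : msupport μ ⊆ Metric.closedBall 0 K) (s : ℝ) (hXmeas : ∀ i, Measurable (X i))
    (hXlaw : ∀ i, P.map (X i) = μ) (hXindep : iIndepFun X P) (n : ℕ) {δ t : ℝ} (hδ : 0 < δ)
    (hδd : δ * √d ≤ 1) (ht : 0 ≤ t) :
    ∫ ω, (⨆ z : msupport μ, |SDemp d r s z n (fun i : Fin n => X i ω) - SDs d r s z μ|) ∂P ≤
      2 * ((2 * K + r + 1) / (2 * |s|) * (δ * √d)) + t +
        (2 * (K + r) / δ + 3) ^ d * (2 * exp (-2 * n * t ^ 2)) := by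
  obtain ⟨T, hTcard, hT⟩ :=
    exists_finset_card_le_forall_norm_sub_le (ι := Fin d) (by positivity : 0 ≤ K + r) hδ
  rw [Fintype.card_fin] at hTcard hT
  set Bad := ⋃ p ∈ T, {ω | t < |empiricalSoftBallMass r s (fun i : Fin n => X i ω) p -
    softBallMass r s μ p|}
  have hBad : MeasurableSet Bad := by
    refine Finset.measurableSet_biUnion T fun p _ => measurableSet_lt measurable_const ?_
    unfold empiricalSoftBallMass
    have := continuous_sig s
    fun_prop
  have hsupp (y) (hy : y ∈ msupport μ) : ‖y‖ ≤ K := by simpa using hμK hy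
  have hμ : ∀ᵐ y ∂μ, ‖y‖ ≤ K := by
    filter_upwards [msupport_eq_support μ ▸ Measure.support_mem_ae (μ := μ)] using hsupp
  have hX : ∀ᵐ ω ∂P, ∀ i, ‖X i ω‖ ≤ K :=
    ae_all_iff.2 fun i => ae_of_ae_map (hXmeas i).aemeasurable ((hXlaw i).symm ▸ hμ)
  have hPBad : P.real Bad ≤ (2 * (K + r) / δ + 3) ^ d * (2 * exp (-2 * n * t ^ 2)) :=
    calc P.real Bad
        ≤ ∑ p ∈ T, P.real {ω | t < |empiricalSoftBallMass r s (fun i : Fin n => X i ω) p -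
          softBallMass r s μ p|} := measureReal_biUnion_finset_le _ _
      _ ≤ ∑ _p ∈ T, 2 * exp (-2 * n * t ^ 2) := Finset.sum_le_sum fun p _ =>
          measureReal_lt_abs_empiricalSoftBallMass_sub_le hXmeas hXlaw hXindep r s p n ht
      _ = T.card * (2 * exp (-2 * n * t ^ 2)) := by rw [Finset.sum_const, nsmul_eq_mul]
      _ ≤ _ := by gcongr
  refine (integral_le_add_measureReal_of_le_one
    (a := 2 * ((2 * K + r + 1) / (2 * |s|) * (δ * √d)) + t) hBad (by positivity)
    (fun ω => Real.iSup_nonneg fun z => abs_nonneg _)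
    (fun ω => Real.iSup_le (fun z => abs_SDemp_sub_SDs_le_one r s _ _) zero_le_one) ?_).trans ?_
  · filter_upwards [hX] with ω hω hωBad
    refine Real.iSup_le (fun z => abs_SDemp_sub_SDs_le_of_net hK hr (by positivity) hδd ht hμ
      (fun i => hω i) (hsupp z z.2) hT fun p hp => not_lt.1 fun h => hωBad (Set.mem_biUnion hp h))
      (by positivity)
  · linarith

end SphereDepth

lemma one_half_le_log {n : ℕ} (hn : 2 ≤ n) : 1 / 2 ≤ log n := by
  have := log_le_log two_pos (by exact_mod_cast hn : (2 : ℝ) ≤ n)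
  linarith [log_two_gt_d9]

/-- A net of mesh `1 / ((d + 1) √n)` has `O(√n ^ d)` points; with the threshold
`t = (d + 1) log n / √n`, the Hoeffding bound `exp (-2 n t²)` pays for them and one more `√n`. -/
lemma sqrt_pow_mul_exp_le_one {n : ℕ} (hn : 2 ≤ n) (d : ℕ) :
    √n ^ (d + 1) * exp (-2 * n * ((d + 1) * log n / √n) ^ 2) ≤ 1 := by
  have hn0 : (0 : ℝ) < n := by positivity
  have hlog := one_half_le_log hn
  have hpow : √n ^ (d + 1) = exp ((d + 1) * (log n / 2)) := by
    rw [← log_sqrt hn0.le, ← exp_log (sqrt_pos.2 hn0), ← exp_nat_mul, log_exp]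
    push_cast
    ring
  have hsq : -2 * n * ((d + 1) * log n / √n) ^ 2 = -2 * (d + 1) ^ 2 * log n ^ 2 := by
    rw [div_pow, sq_sqrt hn0.le]
    field_simp
  rw [hpow, hsq, ← exp_add, exp_le_one_iff]
  have hd : (1 : ℝ) ≤ d + 1 := by simp
  nlinarith [mul_le_mul_of_nonneg_left hd (by linarith : (0 : ℝ) ≤ log n)]

lemma two_mul_div_sqrt_add_le_mul_log_div_sqrt {L B : ℝ} (hL : 0 ≤ L) (hB : 0 ≤ B) {n : ℕ}
    (hn : 2 ≤ n) (d : ℕ) :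
    2 * (L * (1 / √n)) + (d + 1) * log n / √n +
        (B * √n) ^ d * (2 * exp (-2 * n * ((d + 1) * log n / √n) ^ 2)) ≤
      (4 * L + (d + 1) + 4 * B ^ d) * log n / √n := by
  have hm : 0 < √(n : ℝ) := sqrt_pos.2 (by positivity)
  have hlog := one_half_le_log hn
  have hexp := sqrt_pow_mul_exp_le_one hn d
  generalize exp (-2 * n * ((d + 1) * log n / √n) ^ 2) = e at hexp ⊢
  calc _ = (2 * L + 2 * B ^ d * (√n ^ (d + 1) * e)) / √n + (d + 1) * log n / √n := by
        field_simp
        ring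
    _ ≤ (2 * L + 2 * B ^ d * 1) / √n + (d + 1) * log n / √n := by gcongr
    _ ≤ _ := by
        rw [← add_div, div_le_div_iff_of_pos_right hm]
        nlinarith [pow_nonneg hB d]

open ProbabilityTheory in
theorem stmt_18_general (d : ℕ) (μ : Measure (EuclideanSpace ℝ (Fin d))) [IsProbabilityMeasure μ]
    (hbdd : Bornology.IsBounded (msupport μ))
    (r s : ℝ) (hr : 0 < r)
    {Ω : Type*} [MeasurableSpace Ω] (P : Measure Ω) [IsProbabilityMeasure P]
    (X : ℕ → Ω → EuclideanSpace ℝ (Fin d))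
    (hXmeas : ∀ i, Measurable (X i)) (hXlaw : ∀ i, P.map (X i) = μ)
    (hXindep : iIndepFun X P) :
    ∃ C > (0 : ℝ), ∀ n : ℕ, 2 ≤ n →
      (∫ ω, (⨆ z : msupport μ,
          |SDemp d r s (z : EuclideanSpace ℝ (Fin d)) n (fun i : Fin n => X i ω) -
            SDs d r s (z : EuclideanSpace ℝ (Fin d)) μ|) ∂P) ≤
        C * Real.log n / Real.sqrt n := by
  obtain ⟨K₀, hK₀⟩ := hbdd.subset_closedBall 0
  set K := max K₀ 0
  have hK : msupport μ ⊆ Metric.closedBall 0 K :=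
    hK₀.trans (Metric.closedBall_subset_closedBall (le_max_left _ _))
  set L := (2 * K + r + 1) / (2 * |s|)
  set B := 2 * (K + r) * (d + 1) + 3
  refine ⟨4 * L + (d + 1) + 4 * B ^ d, by positivity, fun n hn => ?_⟩
  have hm : 1 ≤ √(n : ℝ) := one_le_sqrt.2 (by exact_mod_cast (by omega : 1 ≤ n))
  have hd : √(d : ℝ) ≤ d + 1 := sqrt_le_iff.2 ⟨by positivity, by nlinarith⟩
  have hδ : 1 / ((d + 1) * √n) * √d ≤ 1 / √n := by
    rw [one_div_mul_eq_div, div_le_div_iff₀ (by positivity) (by positivity)]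
    nlinarith [sqrt_nonneg (n : ℝ)]
  have hbase : 2 * (K + r) / (1 / ((d + 1) * √n)) + 3 ≤ B * √n := by
    rw [div_div_eq_mul_div, div_one]
    nlinarith
  refine (integral_iSup_abs_SDemp_sub_SDs_le (le_max_right _ _) hr.le hK s hXmeas hXlaw hXindep
    n (δ := 1 / ((d + 1) * √n)) (t := (d + 1) * log n / √n) (by positivity)
    (hδ.trans (div_le_one_of_le₀ hm (by positivity))) (by positivity)).trans ?_
  calc _ ≤ 2 * (L * (1 / √n)) + (d + 1) * log n / √n +
        (B * √n) ^ d * (2 * exp (-2 * n * ((d + 1) * log n / √n) ^ 2)) := by gcongr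
    _ ≤ _ := two_mul_div_sqrt_add_le_mul_log_div_sqrt (by positivity) (by positivity) hn d

open ProbabilityTheory in
/-- For `μ` absolutely continuous with bounded support, the expected uniform deviation of
the empirical sphere depth over the support is `O(log n / √n)`. -/
theorem stmt_18 (d : ℕ) (μ : Measure (EuclideanSpace ℝ (Fin d))) [IsProbabilityMeasure μ]
    (habs : μ ≪ volume) (hbdd : Bornology.IsBounded (msupport μ))
    (r s : ℝ) (hr : 0 < r) (hs : 0 < s)
    {Ω : Type*} [MeasurableSpace Ω] (P : Measure Ω) [IsProbabilityMeasure P]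
    (X : ℕ → Ω → EuclideanSpace ℝ (Fin d))
    (hXmeas : ∀ i, Measurable (X i)) (hXlaw : ∀ i, P.map (X i) = μ)
    (hXindep : iIndepFun X P) :
    ∃ C > (0 : ℝ), ∀ n : ℕ, 2 ≤ n →
      (∫ ω, (⨆ z : msupport μ,
          |SDemp d r s (z : EuclideanSpace ℝ (Fin d)) n (fun i : Fin n => X i ω) -
            SDs d r s (z : EuclideanSpace ℝ (Fin d)) μ|) ∂P) ≤
        C * Real.log n / Real.sqrt n :=
  stmt_18_general d μ hbdd r s hr P X hXmeas hXlaw hXindep
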